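/- Noninterference: if M is a well-formed term of ℓΛ∞^{4S}, M reduces at depth 0 to N, and M ⤳ L, then there exists P such that N ⤳ P and L reduces at depth 0 to P. -/

import Mathlib

namespace LLInf

/-- Node labels of preterms of the linear infinitary λ-calculus ℓΛ∞. -/
inductive Shape where
  | var (x : ℕ)
  | app
  | labs (x : ℕ)
  | iabs (x : ℕ)
  | cabs (x : ℕ)
  | ibox
  | cbox
deriving DecidableEq

/-- Preterms: possibly infinite trees, encoded by their (partial) position function. -/
def T : Type := List ℕ → Option Shape

def mk0 (s : Shape) : T := fun p => if p = [] then some s else none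

def mk1 (s : Shape) (M : T) : T := fun p =>
  match p with
  | [] => some s
  | 0 :: q => M q
  | _ => none

def mk2 (M N : T) : T := fun p =>
  match p with
  | [] => some Shape.app
  | 0 :: q => M q
  | 1 :: q => N q
  | _ => none

def child (M : T) (i : ℕ) : T := fun p => M (i :: p)

def bindsX (x : ℕ) : Option Shape → Bool
  | some (Shape.labs y) => y == x
  | some (Shape.iabs y) => y == x
  | some (Shape.cabs y) => y == x
  | _ => false

/-- Capture-avoiding (shadowing-respecting) substitution on positional preterms. -/
def substF (x : ℕ) (N : T) : T → List ℕ → Option Shape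
  | M, [] => if M [] = some (Shape.var x) then N [] else M []
  | M, i :: q =>
      if M [] = some (Shape.var x) then N (i :: q)
      else if bindsX x (M []) then M (i :: q)
      else substF x N (child M i) q
termination_by M p => p.length

def subst (x : ℕ) (N M : T) : T := fun p => substF x N M p

def FreeAt (x : ℕ) : T → List ℕ → Prop
  | M, [] => M [] = some (Shape.var x)
  | M, i :: q => bindsX x (M []) = false ∧ FreeAt x (child M i) q
termination_by M p => p.length

/-- `x` occurs free in `M`. -/
def Free (x : ℕ) (M : T) : Prop := ∃ p, FreeAt x M p

def arity : Shape → ℕ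
  | Shape.var _ => 0
  | Shape.app => 2
  | _ => 1

/-- The position function is a coherent (constructor-generated) tree. -/
def IsPre (M : T) : Prop :=
  (∃ s, M [] = some s) ∧
  (∀ p t, M p = some t → ∀ i, (∃ s, M (p ++ [i]) = some s) ↔ i < arity t) ∧
  (∀ p q, M p = none → M (p ++ q) = none)

/-- Basic reduction of ℓΛ∞. -/
inductive Basic : T → T → Prop
  | lin (x : ℕ) (M N : T) :
      Basic (mk2 (mk1 (Shape.labs x) M) N) (subst x N M)
  | ind (x : ℕ) (M N : T) :
      Basic (mk2 (mk1 (Shape.iabs x) M) (mk1 Shape.ibox N)) (subst x N M)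
  | coi (x : ℕ) (M N : T) :
      Basic (mk2 (mk1 (Shape.cabs x) M) (mk1 Shape.cbox N)) (subst x N M)

/-- One-step reduction, indexed by the level: the list of boxes crossed,
`false` for an inductive box, `true` for a coinductive box. -/
inductive Red : List Bool → T → T → Prop
  | base {M N} : Basic M N → Red [] M N
  | appL {s M N} (P) : Red s M N → Red s (mk2 M P) (mk2 N P)
  | appR {s M N} (P) : Red s M N → Red s (mk2 P M) (mk2 P N)
  | labs {s M N} (x) : Red s M N → Red s (mk1 (Shape.labs x) M) (mk1 (Shape.labs x) N)
  | iabs {s M N} (x) : Red s M N → Red s (mk1 (Shape.iabs x) M) (mk1 (Shape.iabs x) N)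
  | cabs {s M N} (x) : Red s M N → Red s (mk1 (Shape.cabs x) M) (mk1 (Shape.cabs x) N)
  | ibox {s M N} : Red s M N → Red (false :: s) (mk1 Shape.ibox M) (mk1 Shape.ibox N)
  | cbox {s M N} : Red s M N → Red (true :: s) (mk1 Shape.cbox M) (mk1 Shape.cbox N)

def Red' (M N : T) : Prop := ∃ s, Red s M N

/-- Reduction at depth `n`: at a level crossing exactly `n` coinductive boxes. -/
def RedAt (n : ℕ) (M N : T) : Prop := ∃ s, s.count true = n ∧ Red s M N

def Star : T → T → Prop := Relation.ReflTransGen Red'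

/-! ### Environments and well-formation for ℓΛ∞ -/

inductive Pat where
  | lin | ind | coi
deriving DecidableEq

def Env : Type := ℕ → Option Pat

def Env.upd (Γ : Env) (x : ℕ) (p : Option Pat) : Env :=
  fun y => if y = x then p else Γ y

def Env.union (Γ Δ : Env) : Env := fun y => (Γ y).orElse (fun _ => Δ y)

def NoLin (Γ : Env) : Prop := ∀ y, Γ y ≠ some Pat.lin

def OnlyLinAt (Γ : Env) (x : ℕ) : Prop :=
  Γ x = some Pat.lin ∧ ∀ y, y ≠ x → Γ y ≠ some Pat.lin

/-- Splitting of an environment: nonlinear entries are shared, linear ones split. -/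
def Split (Γ Γ₁ Γ₂ : Env) : Prop := ∀ y,
  (Γ₁ y = Γ y ∧ Γ₂ y = Γ y ∧ Γ y ≠ some Pat.lin) ∨
  (Γ y = some Pat.lin ∧
    ((Γ₁ y = some Pat.lin ∧ Γ₂ y = none) ∨ (Γ₂ y = some Pat.lin ∧ Γ₁ y = none)))

/-- The inductive rules of the mixed formal system of ℓΛ∞, with `R` the
judgments provided by the coinductive layer. -/
inductive WFStep (R : Env → T → Prop) : Env → T → Prop
  | base {Γ M} : R Γ M → WFStep R Γ M
  | vl {Γ} (x) : OnlyLinAt Γ x → WFStep R Γ (mk0 (Shape.var x))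
  | vi {Γ} (x) : NoLin Γ → Γ x = some Pat.ind → WFStep R Γ (mk0 (Shape.var x))
  | vc {Γ} (x) : NoLin Γ → Γ x = some Pat.coi → WFStep R Γ (mk0 (Shape.var x))
  | app {Γ Γ₁ Γ₂ M N} : Split Γ Γ₁ Γ₂ → WFStep R Γ₁ M → WFStep R Γ₂ N →
      WFStep R Γ (mk2 M N)
  | ll {Γ x M} : Γ x = none → WFStep R (Γ.upd x (some Pat.lin)) M →
      WFStep R Γ (mk1 (Shape.labs x) M)
  | li {Γ x M} : Γ x = none → WFStep R (Γ.upd x (some Pat.ind)) M →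
      WFStep R Γ (mk1 (Shape.iabs x) M)
  | lc {Γ x M} : Γ x = none → WFStep R (Γ.upd x (some Pat.coi)) M →
      WFStep R Γ (mk1 (Shape.cabs x) M)
  | mi {Γ M} : NoLin Γ → WFStep R Γ M → WFStep R Γ (mk1 Shape.ibox M)

/-- One application of the unique coinductive rule (mc). -/
def CoStep (S : Env → T → Prop) (Γ : Env) (M : T) : Prop :=
  NoLin Γ ∧ ∃ N, M = mk1 Shape.cbox N ∧ S Γ N

/-- Well-formation in ℓΛ∞: greatest fixed point of Ind ∘ Coind, presented via
consistent sets. -/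
def WF (Γ : Env) (M : T) : Prop :=
  ∃ S : Env → T → Prop, (∀ Δ N, S Δ N → WFStep (CoStep S) Δ N) ∧ S Γ M

/-! ### Infinitary reduction ⇒ and its auxiliary relation ⤳ -/

/-- One application of the coinductive ⇒-rule. `true` marks ⇒-judgments,
`false` marks ⤳-judgments. -/
def IRCo (S : Bool → T → T → Prop) (b : Bool) (M L : T) : Prop :=
  b = true ∧ ∃ N, Star M N ∧ S false N L

/-- The inductive ⤳-rules. -/
inductive IRInd (R : Bool → T → T → Prop) : Bool → T → T → Prop
  | base {b M N} : R b M N → IRInd R b M N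
  | varr (x) : IRInd R false (mk0 (Shape.var x)) (mk0 (Shape.var x))
  | app {M N P Q} : IRInd R false M N → IRInd R false P Q →
      IRInd R false (mk2 M P) (mk2 N Q)
  | labs {M N} (x) : IRInd R false M N →
      IRInd R false (mk1 (Shape.labs x) M) (mk1 (Shape.labs x) N)
  | iabs {M N} (x) : IRInd R false M N →
      IRInd R false (mk1 (Shape.iabs x) M) (mk1 (Shape.iabs x) N)
  | cabs {M N} (x) : IRInd R false M N →
      IRInd R false (mk1 (Shape.cabs x) M) (mk1 (Shape.cabs x) N)
  | ibox {M N} : IRInd R false M N →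
      IRInd R false (mk1 Shape.ibox M) (mk1 Shape.ibox N)
  | cbox {M N} : IRInd R true M N →
      IRInd R false (mk1 Shape.cbox M) (mk1 Shape.cbox N)

def IRSys (b : Bool) (M N : T) : Prop :=
  ∃ S : Bool → T → T → Prop,
    (∀ b' M' N', S b' M' N' → IRInd (IRCo S) b' M' N') ∧ S b M N

/-- Infinitary reduction M ⇒ N. -/
def Inf (M N : T) : Prop := IRSys true M N

/-- Auxiliary relation M ⤳ N. -/
def Next (M N : T) : Prop := IRSys false M N

def NormalForm (N : T) : Prop := ∀ s P, ¬ Red s N P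

end LLInf
namespace LLInf

/-! ### The infinitary λ-calculus Λ_{00a} and its Girard-style embedding -/

/-- Inductive rules for membership in Λ_{00a}: when `a = true` the argument
premise goes through the coinductive guard `S`. -/
inductive LamStep (a : Bool) (S : T → Prop) : T → Prop
  | var (x) : LamStep a S (mk0 (Shape.var x))
  | app0 {M N} : a = false → LamStep a S M → LamStep a S N → LamStep a S (mk2 M N)
  | app1 {M N} : a = true → LamStep a S M → S N → LamStep a S (mk2 M N)
  | lam {M} (x) : LamStep a S M → LamStep a S (mk1 (Shape.labs x) M)

/-- `M` is a term of Λ_{00a} (the depth increasing in argument position iff `a`). -/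
def Lam00 (a : Bool) (M : T) : Prop :=
  ∃ S : T → Prop, (∀ N, S N → LamStep a S N) ∧ S M

/-- The Girard-style embedding ⟨·⟩ₐ of Λ_{00a} into ℓΛ∞, positionally:
⟨x⟩ = x, ⟨MN⟩ = ⟨M⟩(◻ₐ⟨N⟩), ⟨λx.M⟩ = λ◻ₐx.⟨M⟩. -/
def embF (a : Bool) : T → List ℕ → Option Shape
  | M, [] =>
      match M [] with
      | some (Shape.var x) => some (Shape.var x)
      | some Shape.app => some Shape.app
      | some (Shape.labs x) => some (if a then Shape.cabs x else Shape.iabs x)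
      | _ => none
  | M, i :: q =>
      match M [] with
      | some Shape.app =>
          if i = 0 then embF a (child M 0) q
          else if i = 1 then
            match q with
            | [] => some (if a then Shape.cbox else Shape.ibox)
            | j :: r => if j = 0 then embF a (child M 1) r else none
          else none
      | some (Shape.labs _) => if i = 0 then embF a (child M 0) q else none
      | _ => none
termination_by M p => p.length
decreasing_by all_goals (simp [List.length_cons]; try omega)

def emb (a : Bool) (M : T) : T := fun p => embF a M p

/-- Reduction at depth `n` in Λ_{00a}: the depth increases only when entering
the second argument of an application, and only when `a = true`. -/
inductive LRed (a : Bool) : ℕ → T → T → Prop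
  | beta (x M N) : LRed a 0 (mk2 (mk1 (Shape.labs x) M) N) (subst x N M)
  | appL {n M N} (P) : LRed a n M N → LRed a n (mk2 M P) (mk2 N P)
  | lam {n M N} (x) : LRed a n M N →
      LRed a n (mk1 (Shape.labs x) M) (mk1 (Shape.labs x) N)
  | appR0 {n M N} (P) : a = false → LRed a n M N → LRed a n (mk2 P M) (mk2 P N)
  | appR1 {n M N} (P) : a = true → LRed a n M N → LRed a (n + 1) (mk2 P M) (mk2 P N)

/-- The environment ◻ₐ(FV(M)): every free variable of `M`, marked inductive
(a = false) or coinductive (a = true). -/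
noncomputable def envOf (a : Bool) (M : T) : Env := fun y =>
  @ite _ (Free y M) (Classical.dec _) (some (if a then Pat.coi else Pat.ind)) none

/-- The defining (guarded) equations of capture-avoiding substitution. -/
def SubstEqs (f : ℕ → T → T → T) : Prop :=
  ∀ x (N : T),
    f x N (mk0 (Shape.var x)) = N ∧
    (∀ y, y ≠ x → f x N (mk0 (Shape.var y)) = mk0 (Shape.var y)) ∧
    (∀ M P, f x N (mk2 M P) = mk2 (f x N M) (f x N P)) ∧
    (∀ y M, y ≠ x → f x N (mk1 (Shape.labs y) M) = mk1 (Shape.labs y) (f x N M)) ∧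
    (∀ M, f x N (mk1 (Shape.labs x) M) = mk1 (Shape.labs x) M) ∧
    (∀ y M, y ≠ x → f x N (mk1 (Shape.iabs y) M) = mk1 (Shape.iabs y) (f x N M)) ∧
    (∀ M, f x N (mk1 (Shape.iabs x) M) = mk1 (Shape.iabs x) M) ∧
    (∀ y M, y ≠ x → f x N (mk1 (Shape.cabs y) M) = mk1 (Shape.cabs y) (f x N M)) ∧
    (∀ M, f x N (mk1 (Shape.cabs x) M) = mk1 (Shape.cabs x) M) ∧
    (∀ M, f x N (mk1 Shape.ibox M) = mk1 Shape.ibox (f x N M)) ∧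
    (∀ M, f x N (mk1 Shape.cbox M) = mk1 Shape.cbox (f x N M))

end LLInf
namespace LLInf

/-! ### The calculus ℓΛ∞^{4S} -/

/-- Patterns of ℓΛ∞^{4S}: x, ↓x, !x, ↑x, #x. -/
inductive Pat4 where
  | lin | dm | im | cm | am
deriving DecidableEq

def Env4 : Type := ℕ → Option Pat4

def Env4.upd (Γ : Env4) (x : ℕ) (p : Option Pat4) : Env4 :=
  fun y => if y = x then p else Γ y

/-- Patterns shared between the premises of applications: ↓, ↑, #. -/
def Shared4 (p : Option Pat4) : Prop :=
  p = some Pat4.dm ∨ p = some Pat4.cm ∨ p = some Pat4.am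

/-- Environment containing only ↓, ↑, # patterns. -/
def Passive4 (Γ : Env4) : Prop := ∀ y, Γ y = none ∨ Shared4 (Γ y)

def Split4 (Γ Γ₁ Γ₂ : Env4) : Prop := ∀ y,
  (Shared4 (Γ y) ∧ Γ₁ y = Γ y ∧ Γ₂ y = Γ y) ∨
  (Γ y = none ∧ Γ₁ y = none ∧ Γ₂ y = none) ∨
  ((Γ y = some Pat4.lin ∨ Γ y = some Pat4.im) ∧
    ((Γ₁ y = Γ y ∧ Γ₂ y = none) ∨ (Γ₂ y = Γ y ∧ Γ₁ y = none)))

/-- Environment transformation of the (mi) rule: conclusion ↓Θ,!Ξ,↑Ψ,#Φ ⊢ !M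
from premise Ξ,↑Ψ,#Φ ⊢ M. -/
def MiEnv (Γ Γ' : Env4) : Prop := ∀ y,
  (Γ y = some Pat4.im ∧ Γ' y = some Pat4.lin) ∨
  (Γ y = some Pat4.cm ∧ Γ' y = some Pat4.cm) ∨
  (Γ y = some Pat4.am ∧ Γ' y = some Pat4.am) ∨
  (Γ y = some Pat4.dm ∧ Γ' y = none) ∨
  (Γ y = none ∧ Γ' y = none)

/-- Environment transformation of the coinductive (mc) rule: conclusion
↓Θ,↑Ξ,#Ψ ⊢ §M from premise #Ξ,#Ψ ⊢ M. -/
def McEnv (Γ Γ' : Env4) : Prop := ∀ y,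
  (Γ y = some Pat4.cm ∧ Γ' y = some Pat4.am) ∨
  (Γ y = some Pat4.am ∧ Γ' y = some Pat4.am) ∨
  (Γ y = some Pat4.dm ∧ Γ' y = none) ∨
  (Γ y = none ∧ Γ' y = none)

/-- The inductive well-formation rules of ℓΛ∞^{4S}. -/
inductive WF4Step (R : Env4 → T → Prop) : Env4 → T → Prop
  | base {Γ M} : R Γ M → WF4Step R Γ M
  | vl {Γ} (x) : Γ x = some Pat4.lin → Passive4 (Γ.upd x none) →
      WF4Step R Γ (mk0 (Shape.var x))
  | vd {Γ} (x) : Γ x = some Pat4.dm → Passive4 Γ → WF4Step R Γ (mk0 (Shape.var x))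
  | va {Γ} (x) : Γ x = some Pat4.am → Passive4 Γ → WF4Step R Γ (mk0 (Shape.var x))
  | app {Γ Γ₁ Γ₂ M N} : Split4 Γ Γ₁ Γ₂ → WF4Step R Γ₁ M → WF4Step R Γ₂ N →
      WF4Step R Γ (mk2 M N)
  | ll {Γ x M} : Γ x = none → WF4Step R (Γ.upd x (some Pat4.lin)) M →
      WF4Step R Γ (mk1 (Shape.labs x) M)
  | li1 {Γ x M} : Γ x = none → WF4Step R (Γ.upd x (some Pat4.dm)) M →
      WF4Step R Γ (mk1 (Shape.iabs x) M)
  | li2 {Γ x M} : Γ x = none → WF4Step R (Γ.upd x (some Pat4.im)) M →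
      WF4Step R Γ (mk1 (Shape.iabs x) M)
  | lc {Γ x M} : Γ x = none → WF4Step R (Γ.upd x (some Pat4.cm)) M →
      WF4Step R Γ (mk1 (Shape.cabs x) M)
  | mi {Γ Γ' M} : MiEnv Γ Γ' → WF4Step R Γ' M → WF4Step R Γ (mk1 Shape.ibox M)

/-- One application of the coinductive rule (mc) of ℓΛ∞^{4S}. -/
def CoStep4 (S : Env4 → T → Prop) (Γ : Env4) (M : T) : Prop :=
  ∃ Γ' N, McEnv Γ Γ' ∧ M = mk1 Shape.cbox N ∧ S Γ' N

/-- Well-formation in ℓΛ∞^{4S}. -/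
def WF4 (Γ : Env4) (M : T) : Prop :=
  ∃ S : Env4 → T → Prop, (∀ Δ N, S Δ N → WF4Step (CoStep4 S) Δ N) ∧ S Γ M

/-! ### Sizes, free occurrences, duplicability factors and weights -/

/-- The defining equations of the size |M|ₘ at depth m, as a relation. -/
inductive SizeRel : T → ℕ → ℕ → Prop
  | var0 (x) : SizeRel (mk0 (Shape.var x)) 0 1
  | ibox0 {M n} : SizeRel M 0 n → SizeRel (mk1 Shape.ibox M) 0 (n + 1)
  | cbox0 (M) : SizeRel (mk1 Shape.cbox M) 0 0
  | app0 {M N n p} : SizeRel M 0 n → SizeRel N 0 p →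
      SizeRel (mk2 M N) 0 (n + p + 1)
  | labs0 {M n} (x) : SizeRel M 0 n → SizeRel (mk1 (Shape.labs x) M) 0 (n + 1)
  | iabs0 {M n} (x) : SizeRel M 0 n → SizeRel (mk1 (Shape.iabs x) M) 0 (n + 1)
  | cabs0 {M n} (x) : SizeRel M 0 n → SizeRel (mk1 (Shape.cabs x) M) 0 (n + 1)
  | varS (x m) : SizeRel (mk0 (Shape.var x)) (m + 1) 0
  | iboxS {M m n} : SizeRel M (m + 1) n → SizeRel (mk1 Shape.ibox M) (m + 1) n
  | cboxS {M m n} : SizeRel M m n → SizeRel (mk1 Shape.cbox M) (m + 1) n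
  | appS {M N m n p} : SizeRel M (m + 1) n → SizeRel N (m + 1) p →
      SizeRel (mk2 M N) (m + 1) (n + p)
  | labsS {M m n} (x) : SizeRel M (m + 1) n → SizeRel (mk1 (Shape.labs x) M) (m + 1) n
  | iabsS {M m n} (x) : SizeRel M (m + 1) n → SizeRel (mk1 (Shape.iabs x) M) (m + 1) n
  | cabsS {M m n} (x) : SizeRel M (m + 1) n → SizeRel (mk1 (Shape.cabs x) M) (m + 1) n

/-- Number of free occurrences of `x`, as a relation. -/
inductive NFO (x : ℕ) : T → ℕ → Prop
  | varEq : NFO x (mk0 (Shape.var x)) 1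
  | varNe {y} : y ≠ x → NFO x (mk0 (Shape.var y)) 0
  | app {M N n p} : NFO x M n → NFO x N p → NFO x (mk2 M N) (n + p)
  | labsSh (M) : NFO x (mk1 (Shape.labs x) M) 0
  | labs {y M n} : y ≠ x → NFO x M n → NFO x (mk1 (Shape.labs y) M) n
  | iabsSh (M) : NFO x (mk1 (Shape.iabs x) M) 0
  | iabs {y M n} : y ≠ x → NFO x M n → NFO x (mk1 (Shape.iabs y) M) n
  | cabsSh (M) : NFO x (mk1 (Shape.cabs x) M) 0
  | cabs {y M n} : y ≠ x → NFO x M n → NFO x (mk1 (Shape.cabs y) M) n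
  | ibox {M n} : NFO x M n → NFO x (mk1 Shape.ibox M) n
  | cbox {M n} : NFO x M n → NFO x (mk1 Shape.cbox M) n
  | cboxNot {M} : ¬ Free x M → NFO x (mk1 Shape.cbox M) 0

/-- The defining equations of the duplicability factor Dₘ(M), as a relation. -/
inductive DRel : T → ℕ → ℕ → Prop
  | var0 (x) : DRel (mk0 (Shape.var x)) 0 1
  | ibox0 {M d} : DRel M 0 d → DRel (mk1 Shape.ibox M) 0 d
  | cbox0 (M) : DRel (mk1 Shape.cbox M) 0 1
  | app0 {M N d e} : DRel M 0 d → DRel N 0 e → DRel (mk2 M N) 0 (max d e)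
  | labs0 {M d} (x) : DRel M 0 d → DRel (mk1 (Shape.labs x) M) 0 d
  | cabs0 {M d} (x) : DRel M 0 d → DRel (mk1 (Shape.cabs x) M) 0 d
  | iabs0 {x M k d} : NFO x M k → DRel M 0 d →
      DRel (mk1 (Shape.iabs x) M) 0 (max k d)
  | varS (x m) : DRel (mk0 (Shape.var x)) (m + 1) 1
  | iboxS {M m d} : DRel M (m + 1) d → DRel (mk1 Shape.ibox M) (m + 1) d
  | cboxS {M m d} : DRel M m d → DRel (mk1 Shape.cbox M) (m + 1) d
  | appS {M N m d e} : DRel M (m + 1) d → DRel N (m + 1) e →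
      DRel (mk2 M N) (m + 1) (max d e)
  | labsS {M m d} (x) : DRel M (m + 1) d → DRel (mk1 (Shape.labs x) M) (m + 1) d
  | iabsS {M m d} (x) : DRel M (m + 1) d → DRel (mk1 (Shape.iabs x) M) (m + 1) d
  | cabsS {M m d} (x) : DRel M (m + 1) d → DRel (mk1 (Shape.cabs x) M) (m + 1) d

/-- The defining equations of the n-weight wⁿₘ(M), as a relation. -/
inductive WRel (n : ℕ) : T → ℕ → ℕ → Prop
  | var0 (x) : WRel n (mk0 (Shape.var x)) 0 1
  | ibox0 {M w} : WRel n M 0 w → WRel n (mk1 Shape.ibox M) 0 (n * w)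
  | cbox0 (M) : WRel n (mk1 Shape.cbox M) 0 0
  | app0 {M N w v} : WRel n M 0 w → WRel n N 0 v → WRel n (mk2 M N) 0 (w + v)
  | labs0 {M w} (x) : WRel n M 0 w → WRel n (mk1 (Shape.labs x) M) 0 (w + 1)
  | iabs0 {M w} (x) : WRel n M 0 w → WRel n (mk1 (Shape.iabs x) M) 0 (w + 1)
  | cabs0 {M w} (x) : WRel n M 0 w → WRel n (mk1 (Shape.cabs x) M) 0 (w + 1)
  | varS (x m) : WRel n (mk0 (Shape.var x)) (m + 1) 0
  | iboxS {M m w} : WRel n M (m + 1) w → WRel n (mk1 Shape.ibox M) (m + 1) w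
  | cboxS {M m w} : WRel n M m w → WRel n (mk1 Shape.cbox M) (m + 1) w
  | appS {M N m w v} : WRel n M (m + 1) w → WRel n N (m + 1) v →
      WRel n (mk2 M N) (m + 1) (w + v)
  | labsS {M m w} (x) : WRel n M (m + 1) w → WRel n (mk1 (Shape.labs x) M) (m + 1) w
  | iabsS {M m w} (x) : WRel n M (m + 1) w → WRel n (mk1 (Shape.iabs x) M) (m + 1) w
  | cabsS {M m w} (x) : WRel n M (m + 1) w → WRel n (mk1 (Shape.cabs x) M) (m + 1) w

/-- Wₘ(M) = w^{Dₘ(M)}ₘ(M): the weight of `M` at depth `m`. -/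
def TW (M : T) (m w : ℕ) : Prop := ∃ d, DRel M m d ∧ WRel d M m w

end LLInf

/-!
Noninterference is proved by induction on the depth-0 step `M → N`: inverting `M ⤳ L` along the
path to the redex leaves only the contraction of the redex `(λx.M₀) N₀ ⤳ (λx.M₀') N₀'`, where
well-formation of `M` is what makes substitution commute with `⤳`.

For a linear or inductive redex, `x` occurs in no coinductive box of `M₀`, so
`M₀[N₀/x] ⤳ M₀'[N₀'/x]` follows by induction on the inductive part of `M₀ ⤳ M₀'`.

For a coinductive redex `(λ↑x.M₀)(§N₀)` with `N₀ →* P ⤳ N₀'`, `x` occurs only inside boxes of `M₀`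
and no free variable of `N₀` is bound in `M₀`. A box body `c` of `M₀` with `c →* c₁ ⤳ c'` gives
`c[N₀/x] →* c₁[N₀/x] →* c₁[P/x at depth 0, N₀/x deeper]`, the second part reducing the copies of
`N₀` at depth 0, which are finitely many because well-formed terms and their reducts are finite
above their boxes. The last term is related to `c'[N₀'/x]` in the same way as the original pair,
so the claim follows by coinduction.
-/

namespace LLInf

section Trees

def empty : T := fun _ => none

@[simp] lemma empty_apply (p : List ℕ) : empty p = none := rfl

@[simp] lemma mk0_nil (s : Shape) : mk0 s [] = some s := rfl
@[simp] lemma mk1_nil (s : Shape) (M : T) : mk1 s M [] = some s := rfl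
@[simp] lemma mk2_nil (M N : T) : mk2 M N [] = some Shape.app := rfl

@[simp] lemma child_mk0 (s : Shape) (i : ℕ) : child (mk0 s) i = empty := by
  funext q; simp [child, mk0]
@[simp] lemma child_mk1_zero (s : Shape) (M : T) : child (mk1 s M) 0 = M := rfl
@[simp] lemma child_mk1_succ (s : Shape) (M : T) (i : ℕ) :
    child (mk1 s M) (i + 1) = empty := rfl
@[simp] lemma child_mk2_zero (M N : T) : child (mk2 M N) 0 = M := rfl
@[simp] lemma child_mk2_one (M N : T) : child (mk2 M N) 1 = N := rfl
@[simp] lemma child_mk2_add_two (M N : T) (i : ℕ) :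
    child (mk2 M N) (i + 2) = empty := rfl
@[simp] lemma child_empty (i : ℕ) : child empty i = empty := rfl

@[simp] lemma mk1_ne_empty (s : Shape) (M : T) : mk1 s M ≠ empty := fun h => by
  simpa using congrFun h []
@[simp] lemma mk2_ne_empty (M N : T) : mk2 M N ≠ empty := fun h => by simpa using congrFun h []

lemma ext_child {M N : T} (h₀ : M [] = N []) (h : ∀ i, child M i = child N i) : M = N := by
  funext p
  cases p with
  | nil => exact h₀
  | cons i q => exact congrFun (h i) q

lemma mk1_inj {s s' : Shape} {M M' : T} : mk1 s M = mk1 s' M' ↔ s = s' ∧ M = M' := by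
  refine ⟨fun h => ⟨by simpa using congrFun h [], congrArg (child · 0) h⟩, ?_⟩
  rintro ⟨rfl, rfl⟩; rfl

lemma mk2_inj {M N M' N' : T} : mk2 M N = mk2 M' N' ↔ M = M' ∧ N = N' := by
  refine ⟨fun h => ⟨congrArg (child · 0) h, congrArg (child · 1) h⟩, ?_⟩
  rintro ⟨rfl, rfl⟩; rfl

lemma eq_of_root_child {P : T → Prop} {F G : T → T}
    (h : ∀ C, P C → F C = G C ∨
      (F C [] = G C [] ∧ ∀ i, P (child C i) ∧
        child (F C) i = F (child C i) ∧ child (G C) i = G (child C i))) :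
    ∀ C, P C → F C = G C := by
  intro C hC
  funext p
  induction p generalizing C with
  | nil => rcases h C hC with e | ⟨e, -⟩ <;> simp [e]
  | cons i q ih =>
    rcases h C hC with e | ⟨-, hi⟩
    · rw [e]
    · obtain ⟨hPi, hF, hG⟩ := hi i
      show child (F C) i q = child (G C) i q
      rw [hF, hG]
      exact ih (child C i) hPi

end Trees

section Binders

variable {x y : ℕ}

@[simp] lemma bindsX_none : bindsX x none = false := rfl
@[simp] lemma bindsX_var : bindsX x (some (Shape.var y)) = false := rfl
@[simp] lemma bindsX_app : bindsX x (some Shape.app) = false := rfl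
@[simp] lemma bindsX_labs : bindsX x (some (Shape.labs y)) = (y == x) := rfl
@[simp] lemma bindsX_iabs : bindsX x (some (Shape.iabs y)) = (y == x) := rfl
@[simp] lemma bindsX_cabs : bindsX x (some (Shape.cabs y)) = (y == x) := rfl
@[simp] lemma bindsX_ibox : bindsX x (some Shape.ibox) = false := rfl
@[simp] lemma bindsX_cbox : bindsX x (some Shape.cbox) = false := rfl

end Binders

section Subst

variable {x : ℕ} {A C : T}

lemma subst_nil : subst x A C [] = if C [] = some (Shape.var x) then A [] else C [] := by
  simp only [subst]; unfold substF; rfl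

lemma subst_nil_of_ne (h : C [] ≠ some (Shape.var x)) : subst x A C [] = C [] := by
  simp [subst_nil, h]

lemma child_subst_eq (i : ℕ) : child (subst x A C) i =
    if C [] = some (Shape.var x) then child A i
    else if bindsX x (C []) then child C i else subst x A (child C i) := by
  funext q
  simp only [child, subst]
  unfold substF
  split_ifs <;> rfl

lemma subst_of_root_var (h : C [] = some (Shape.var x)) : subst x A C = A :=
  ext_child (by simp [subst_nil, h]) fun i => by simp [child_subst_eq, h]

lemma subst_of_binds (h : bindsX x (C []) = true) : subst x A C = C := by
  have hv : C [] ≠ some (Shape.var x) := fun e => by simp [e] at h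
  exact ext_child (by simp [subst_nil, hv]) fun i => by simp [child_subst_eq, hv, h]

lemma child_subst (hv : C [] ≠ some (Shape.var x)) (hb : bindsX x (C []) = false) (i : ℕ) :
    child (subst x A C) i = subst x A (child C i) := by
  simp [child_subst_eq, hv, hb]

lemma subst_empty : subst x A empty = empty :=
  eq_of_root_child (P := (· = empty)) (G := fun _ => empty) (fun C hC => by
    subst hC
    refine Or.inr ⟨by simp [subst_nil], fun i => ⟨rfl, ?_, rfl⟩⟩
    exact child_subst (by simp) (by simp) i) empty rfl

@[simp] lemma subst_mk2 (M N : T) : subst x A (mk2 M N) = mk2 (subst x A M) (subst x A N) := by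
  refine ext_child (by simp [subst_nil]) fun i => ?_
  rw [child_subst (by simp) (by simp)]
  rcases i with _ | _ | i <;> simp [subst_empty]

lemma subst_mk1 {s : Shape} (M : T) (hv : s ≠ Shape.var x) :
    subst x A (mk1 s M) = mk1 s (if bindsX x (some s) then M else subst x A M) := by
  split_ifs with hb
  · exact subst_of_binds hb
  · refine ext_child (by simp [subst_nil, hv]) fun i => ?_
    rw [child_subst (by simpa using hv) (by simpa using hb)]
    rcases i with _ | i <;> simp [subst_empty]

@[simp] lemma subst_var {y : ℕ} :
    subst x A (mk0 (Shape.var y)) = if y = x then A else mk0 (Shape.var y) := by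
  split_ifs with h
  · exact subst_of_root_var (by simp [h])
  · exact ext_child (by simp [subst_nil, h]) fun i => by
      rw [child_subst (by simpa using h) rfl]; simp [subst_empty]

@[simp] lemma subst_labs {y : ℕ} (M : T) : subst x A (mk1 (Shape.labs y) M) =
    mk1 (Shape.labs y) (if y = x then M else subst x A M) := by simp [subst_mk1]
@[simp] lemma subst_iabs {y : ℕ} (M : T) : subst x A (mk1 (Shape.iabs y) M) =
    mk1 (Shape.iabs y) (if y = x then M else subst x A M) := by simp [subst_mk1]
@[simp] lemma subst_cabs {y : ℕ} (M : T) : subst x A (mk1 (Shape.cabs y) M) =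
    mk1 (Shape.cabs y) (if y = x then M else subst x A M) := by simp [subst_mk1]
@[simp] lemma subst_ibox (M : T) : subst x A (mk1 Shape.ibox M) = mk1 Shape.ibox (subst x A M) := by
  simp [subst_mk1]
@[simp] lemma subst_cbox (M : T) : subst x A (mk1 Shape.cbox M) = mk1 Shape.cbox (subst x A M) := by
  simp [subst_mk1]

end Subst

section Free

variable {x y : ℕ} {s : Shape} {M N : T}

@[simp] lemma freeAt_nil : FreeAt x M [] ↔ M [] = some (Shape.var x) := by
  simp [FreeAt]

@[simp] lemma freeAt_cons {i : ℕ} {q : List ℕ} :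
    FreeAt x M (i :: q) ↔ bindsX x (M []) = false ∧ FreeAt x (child M i) q := by
  simp [FreeAt]

lemma not_freeAt_empty (p : List ℕ) : ¬ FreeAt x empty p := by
  induction p with
  | nil => simp
  | cons i q ih => simp [bindsX, ih]

lemma ne_empty_of_freeAt {p : List ℕ} (h : FreeAt x M p) : M ≠ empty := by
  rintro rfl; exact not_freeAt_empty p h

lemma free_iff : Free x M ↔
    M [] = some (Shape.var x) ∨ bindsX x (M []) = false ∧ ∃ i, Free x (child M i) := by
  constructor
  · rintro ⟨_ | ⟨i, q⟩, h⟩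
    · exact Or.inl (freeAt_nil.1 h)
    · exact Or.inr ⟨(freeAt_cons.1 h).1, i, q, (freeAt_cons.1 h).2⟩
  · rintro (h | ⟨hb, i, q, h⟩)
    · exact ⟨[], freeAt_nil.2 h⟩
    · exact ⟨i :: q, freeAt_cons.2 ⟨hb, h⟩⟩

lemma not_free_empty : ¬ Free x empty := fun ⟨p, h⟩ => not_freeAt_empty p h

lemma free_mk2 : Free x (mk2 M N) ↔ Free x M ∨ Free x N := by
  rw [free_iff]
  constructor
  · rintro (h | ⟨-, (_ | _ | i), h⟩)
    · simp at h
    · exact Or.inl h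
    · exact Or.inr h
    · exact absurd h (by simpa using not_free_empty)
  · rintro (h | h)
    · exact Or.inr ⟨by simp, 0, h⟩
    · exact Or.inr ⟨by simp, 1, h⟩

lemma free_mk1 (hs : s ≠ Shape.var x) :
    Free x (mk1 s M) ↔ bindsX x (some s) = false ∧ Free x M := by
  rw [free_iff]
  constructor
  · rintro (h | ⟨hb, (_ | i), h⟩)
    · exact absurd (by simpa using h) hs
    · exact ⟨hb, h⟩
    · exact absurd h (by simpa using not_free_empty)
  · rintro ⟨hb, h⟩
    exact Or.inr ⟨hb, 0, h⟩

end Free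

def NoBinder (y : ℕ) (M : T) : Prop := ∀ p, bindsX y (M p) = false

/-- `A` can be substituted for `x` in `M`, and in every reduct of `M`, without capture. -/
def CaptureFree (x : ℕ) (A M : T) : Prop := ∀ y, y = x ∨ Free y A → NoBinder y M

section NoBinder

variable {y : ℕ} {s : Shape} {M N : T}

lemma NoBinder.child (h : NoBinder y M) (i : ℕ) : NoBinder y (child M i) := fun p => h (i :: p)

lemma noBinder_mk2 : NoBinder y (mk2 M N) ↔ NoBinder y M ∧ NoBinder y N := by
  refine ⟨fun h => ⟨h.child 0, h.child 1⟩, fun ⟨hM, hN⟩ p => ?_⟩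
  rcases p with _ | ⟨_ | _ | i, q⟩
  exacts [rfl, hM q, hN q, rfl]

lemma noBinder_mk1 : NoBinder y (mk1 s M) ↔ bindsX y (some s) = false ∧ NoBinder y M := by
  refine ⟨fun h => ⟨h [], h.child 0⟩, fun ⟨hs, hM⟩ p => ?_⟩
  rcases p with _ | ⟨_ | i, q⟩
  exacts [hs, hM q, rfl]

lemma CaptureFree.child {x : ℕ} {A : T} (h : CaptureFree x A M) (i : ℕ) :
    CaptureFree x A (LLInf.child M i) :=
  fun y hy => (h y hy).child i

end NoBinder

section SubstFacts

variable {x z : ℕ} {A B C : T}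

lemma subst_of_not_free (h : ¬ Free x C) : subst x A C = C := by
  refine eq_of_root_child (P := fun C => ¬ Free x C) (G := id) (fun C hC => ?_) C h
  have hv : C [] ≠ some (Shape.var x) := fun e => hC (free_iff.2 (Or.inl e))
  by_cases hb : bindsX x (C []) = true
  · exact Or.inl (subst_of_binds hb)
  · simp only [Bool.not_eq_true] at hb
    refine Or.inr ⟨subst_nil_of_ne hv, fun i => ⟨fun hi => hC ?_, child_subst hv hb i, rfl⟩⟩
    exact free_iff.2 (Or.inr ⟨hb, i, hi⟩)

lemma exists_of_subst_eq_some {s : Shape} (p : List ℕ) (h : subst z B C p = some s) :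
    (∃ q, C q = some s) ∨ ∃ q, B q = some s := by
  induction p generalizing C with
  | nil =>
    rw [subst_nil] at h
    split_ifs at h
    exacts [Or.inr ⟨[], h⟩, Or.inl ⟨[], h⟩]
  | cons i q ih =>
    have h' : child (subst z B C) i q = some s := h
    rw [child_subst_eq] at h'
    split_ifs at h'
    · exact Or.inr ⟨i :: q, h'⟩
    · exact Or.inl ⟨i :: q, h'⟩
    · exact (ih h').imp (fun ⟨r, hr⟩ => ⟨i :: r, hr⟩) id

lemma NoBinder.subst {y : ℕ} (hC : NoBinder y C) (hB : NoBinder y B) :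
    NoBinder y (LLInf.subst z B C) := by
  intro p
  rcases h : LLInf.subst z B C p with _ | s
  · rfl
  · rcases exists_of_subst_eq_some p h with ⟨q, hq⟩ | ⟨q, hq⟩
    · simpa [hq] using hC q
    · simpa [hq] using hB q

lemma free_of_free_subst {y : ℕ} (h : Free y (subst z B C)) : z ≠ y ∧ Free y C ∨ Free y B := by
  obtain ⟨p, hp⟩ := h
  induction p generalizing C with
  | nil =>
    rw [freeAt_nil, subst_nil] at hp
    split_ifs at hp with hv
    · exact Or.inr ⟨[], freeAt_nil.2 hp⟩
    · exact Or.inl ⟨fun e => hv (e ▸ hp), [], freeAt_nil.2 hp⟩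
  | cons i q ih =>
    by_cases hv : C [] = some (Shape.var z)
    · rw [subst_of_root_var hv] at hp
      exact Or.inr ⟨_, hp⟩
    by_cases hb : bindsX z (C []) = true
    · rw [subst_of_binds hb] at hp
      refine Or.inl ⟨?_, _, hp⟩
      rintro rfl
      simp [(freeAt_cons.1 hp).1] at hb
    simp only [Bool.not_eq_true] at hb
    rw [freeAt_cons, child_subst hv hb, subst_nil_of_ne hv] at hp
    exact (ih hp.2).imp (fun ⟨hyz, r, hr⟩ => ⟨hyz, i :: r, freeAt_cons.2 ⟨hp.1, hr⟩⟩) id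

lemma subst_subst (hxz : x ≠ z) (hzA : ¬ Free z A) (hC : NoBinder x C) :
    subst x A (subst z B C) = subst z (subst x A B) (subst x A C) := by
  refine eq_of_root_child (P := NoBinder x) (F := fun C => subst x A (subst z B C))
    (G := fun C => subst z (subst x A B) (subst x A C)) (fun C hC => ?_) C hC
  have hbx : bindsX x (C []) = false := hC []
  by_cases hz : C [] = some (Shape.var z)
  · have hvx : C [] ≠ some (Shape.var x) := by simp [hz, Ne.symm hxz]
    left
    rw [subst_of_root_var hz,
      subst_of_root_var (C := subst x A C) (by rw [subst_nil_of_ne hvx, hz])]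
  by_cases hx : C [] = some (Shape.var x)
  · left
    rw [subst_of_root_var hx, subst_of_not_free hzA,
      subst_of_root_var (by rw [subst_nil_of_ne hz, hx])]
  by_cases hbz : bindsX z (C []) = true
  · left
    rw [subst_of_binds hbz, subst_of_binds (C := subst x A C) (by rwa [subst_nil_of_ne hx])]
  simp only [Bool.not_eq_true] at hbz
  have hD : subst z B C [] = C [] := subst_nil_of_ne hz
  have hE : subst x A C [] = C [] := subst_nil_of_ne hx
  refine Or.inr ⟨by rw [subst_nil_of_ne (by rwa [hD]), hD, subst_nil_of_ne (by rwa [hE]), hE],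
    fun i => ⟨hC.child i, ?_, ?_⟩⟩
  · rw [child_subst (by rwa [hD]) (by rwa [hD]), child_subst hz hbz]
  · rw [child_subst (by rwa [hE]) (by rwa [hE]), child_subst hx hbx]

end SubstFacts

section Reduction

variable {s : List Bool} {x y : ℕ} {A M N : T}

lemma Red.ne_empty (h : Red s M N) : M ≠ empty := by
  cases h with
  | base hb => cases hb <;> simp
  | _ => simp

lemma NoBinder.red (h : Red s M N) (hM : NoBinder y M) : NoBinder y N := by
  induction h with
  | base hb =>
    cases hb <;> simp only [noBinder_mk2, noBinder_mk1] at hM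
    · exact hM.1.2.subst hM.2
    · exact hM.1.2.subst hM.2.2
    · exact hM.1.2.subst hM.2.2
  | appL _ _ ih => rw [noBinder_mk2] at hM ⊢; exact ⟨ih hM.1, hM.2⟩
  | appR _ _ ih => rw [noBinder_mk2] at hM ⊢; exact ⟨hM.1, ih hM.2⟩
  | labs _ _ ih | iabs _ _ ih | cabs _ _ ih | ibox _ ih | cbox _ ih =>
    rw [noBinder_mk1] at hM ⊢; exact ⟨hM.1, ih hM.2⟩

lemma Free.of_red (h : Red s M N) (hN : Free y N) : Free y M := by
  induction h with
  | base hb =>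
    cases hb <;> rcases free_of_free_subst hN with ⟨hyz, h⟩ | h
    all_goals simp_all [free_mk2, free_mk1]
  | appL _ _ ih => rw [free_mk2] at hN ⊢; exact hN.imp_left ih
  | appR _ _ ih => rw [free_mk2] at hN ⊢; exact hN.imp_right ih
  | labs _ _ ih | iabs _ _ ih | cabs _ _ ih | ibox _ ih | cbox _ ih =>
    rw [free_mk1 (by simp)] at hN ⊢; exact ⟨hN.1, ih hN.2⟩

lemma NoBinder.star (h : Star M N) (hM : NoBinder y M) : NoBinder y N := by
  induction h with
  | refl => exact hM
  | tail _ hstep ih => exact ih.red hstep.choose_spec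

lemma Free.of_star (h : Star M N) (hN : Free y N) : Free y M := by
  induction h with
  | refl => exact hN
  | tail _ hstep ih => exact ih (hN.of_red hstep.choose_spec)

lemma Basic.subst (hb : Basic M N) (h : CaptureFree x A M) :
    Basic (LLInf.subst x A M) (LLInf.subst x A N) := by
  cases hb with
  | lin z M₀ N₀ | ind z M₀ N₀ | coi z M₀ N₀ =>
    have hzx : z ≠ x := fun e => by simpa [e] using (h x (Or.inl rfl)).child 0 []
    have hzA : ¬ Free z A := fun hz => by simpa using (h z (Or.inr hz)).child 0 []
    have hM₀ : NoBinder x M₀ := fun p => h x (Or.inl rfl) (0 :: 0 :: p)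
    simp only [subst_mk2, subst_labs, subst_iabs, subst_cabs, subst_ibox, subst_cbox, hzx,
      if_false, subst_subst (Ne.symm hzx) hzA hM₀]
    constructor

lemma Red.subst (h : Red s M N) (hM : CaptureFree x A M) :
    Red s (LLInf.subst x A M) (LLInf.subst x A N) := by
  induction h with
  | base hb => exact .base (hb.subst hM)
  | appL _ _ ih => simpa using .appL _ (ih (hM.child 0))
  | appR _ _ ih => simpa using .appR _ (ih (hM.child 1))
  | labs z _ ih | iabs z _ ih | cabs z _ ih =>
    have hzx : z ≠ x := by simpa using hM x (Or.inl rfl) []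
    simp only [subst_labs, subst_iabs, subst_cabs, hzx, if_false]
    constructor
    exact ih (hM.child 0)
  | ibox _ ih => simpa using .ibox (ih (hM.child 0))
  | cbox _ ih => simpa using .cbox (ih (hM.child 0))

lemma Star.subst (h : Star M N) (hM : CaptureFree x A M) :
    Star (LLInf.subst x A M) (LLInf.subst x A N) := by
  induction h using Relation.ReflTransGen.head_induction_on with
  | refl => exact .refl
  | head hstep _ ih =>
    obtain ⟨s, hs⟩ := hstep
    exact .head ⟨s, hs.subst hM⟩ (ih fun y hy => (hM y hy).red hs)

end Reduction

section Coinduction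

variable {R R' : Bool → T → T → Prop} {b : Bool} {M N : T}

lemma IRInd.mono (hR : ∀ b M N, R b M N → R' b M N) (h : IRInd R b M N) : IRInd R' b M N := by
  induction h with
  | base hr => exact .base (hR _ _ _ hr)
  | varr x => exact .varr x
  | app _ _ ih₁ ih₂ => exact .app ih₁ ih₂
  | labs x _ ih => exact .labs x ih
  | iabs x _ ih => exact .iabs x ih
  | cabs x _ ih => exact .cabs x ih
  | ibox _ ih => exact .ibox ih
  | cbox _ ih => exact .cbox ih

lemma IRCo.mono (hR : ∀ b M N, R b M N → R' b M N) : IRCo R b M N → IRCo R' b M N :=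
  fun ⟨hb, P, hMP, hPN⟩ => ⟨hb, P, hMP, hR _ _ _ hPN⟩

lemma irSys_iff : IRSys b M N ↔ IRInd (IRCo IRSys) b M N := by
  constructor
  · rintro ⟨S, hS, h⟩
    exact (hS _ _ _ h).mono fun _ _ _ => IRCo.mono fun _ _ _ h' => ⟨S, hS, h'⟩
  · intro h
    refine ⟨fun b M N => IRInd (IRCo IRSys) b M N, fun _ _ _ h' => ?_, h⟩
    exact h'.mono fun _ _ _ => IRCo.mono fun _ _ _ ⟨S, hS, h''⟩ =>
      (hS _ _ _ h'').mono fun _ _ _ => IRCo.mono fun _ _ _ h''' => ⟨S, hS, h'''⟩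

lemma IRSys.coinduct (S : Bool → T → T → Prop)
    (hS : ∀ b M N, S b M N → IRInd (IRCo fun b M N => S b M N ∨ IRSys b M N) b M N)
    (h : S b M N) : IRSys b M N := by
  refine ⟨fun b M N => S b M N ∨ IRSys b M N, fun b M N h' => ?_, Or.inl h⟩
  rcases h' with h' | h'
  · exact hS b M N h'
  · exact (irSys_iff.1 h').mono fun _ _ _ => IRCo.mono fun _ _ _ => Or.inr

lemma IRInd.exists_star_of_true (h : IRInd (IRCo R) true M N) : ∃ P, Star M P ∧ R false P N := by
  cases h with
  | base hr => exact hr.2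

lemma IRInd.mk1 {s : Shape} {A A' : T} (hs : arity s = 1) (hc : s ≠ Shape.cbox)
    (h : IRInd R false A A') : IRInd R false (mk1 s A) (mk1 s A') := by
  cases s <;> simp [arity] at hs hc
  exacts [.labs _ h, .iabs _ h, .cabs _ h, .ibox h]

lemma IRCo.not_false : ¬ IRCo R false M N := fun h => Bool.false_ne_true h.1

end Coinduction

/-- `M ⤳ N` unfolded once. -/
abbrev NextStep (M N : T) : Prop := IRInd (IRCo IRSys) false M N

lemma next_iff {M N : T} : Next M N ↔ NextStep M N := irSys_iff

section NextStep

variable {s : Shape} {A B M N L : T}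

lemma NextStep.inv_mk2 (h : NextStep (mk2 A B) L) :
    ∃ A' B', L = mk2 A' B' ∧ NextStep A A' ∧ NextStep B B' := by
  generalize hM : mk2 A B = M at h
  cases h with
  | base hr => exact absurd hr IRCo.not_false
  | app h₁ h₂ => obtain ⟨rfl, rfl⟩ := mk2_inj.1 hM; exact ⟨_, _, rfl, h₁, h₂⟩
  | _ => simpa using congrFun hM []

lemma NextStep.inv_mk1 (hs : arity s = 1) (hc : s ≠ Shape.cbox) (h : NextStep (mk1 s A) L) :
    ∃ A', L = mk1 s A' ∧ NextStep A A' := by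
  generalize hM : mk1 s A = M at h
  cases h with
  | base hr => exact absurd hr IRCo.not_false
  | labs x h₁ | iabs x h₁ | cabs x h₁ | ibox h₁ =>
    obtain ⟨rfl, rfl⟩ := mk1_inj.1 hM
    exact ⟨_, rfl, h₁⟩
  | cbox => exact absurd (mk1_inj.1 hM).1 hc
  | _ =>
    obtain rfl : s = _ := by simpa using congrFun hM []
    simp [arity] at hs

lemma NextStep.inv_cbox (h : NextStep (mk1 Shape.cbox A) L) :
    ∃ A' P, L = mk1 Shape.cbox A' ∧ Star A P ∧ Next P A' := by
  generalize hM : mk1 Shape.cbox A = M at h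
  cases h with
  | base hr => exact absurd hr IRCo.not_false
  | cbox h₁ =>
    obtain ⟨-, rfl⟩ := mk1_inj.1 hM
    obtain ⟨P, hAP, hP⟩ := h₁.exists_star_of_true
    exact ⟨_, P, rfl, hAP, hP⟩
  | _ => simpa using congrFun hM []

lemma NextStep.root_eq (h : NextStep M N) : M [] = N [] := by
  cases h
  case base hr => exact absurd hr IRCo.not_false
  all_goals rfl

lemma Free.of_next {y : ℕ} (h : Next M N) (hf : Free y N) : Free y M := by
  obtain ⟨p, hp⟩ := hf
  induction p generalizing M N with
  | nil => exact free_iff.2 (Or.inl ((next_iff.1 h).root_eq.trans (freeAt_nil.1 hp)))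
  | cons i q ih =>
    rw [freeAt_cons] at hp
    have h' := next_iff.1 h
    refine free_iff.2 (Or.inr ⟨h'.root_eq ▸ hp.1, i, ?_⟩)
    have hq : child N i ≠ empty := ne_empty_of_freeAt hp.2
    cases h' with
    | base hr => exact absurd hr IRCo.not_false
    | varr x => simp at hq
    | app h₁ h₂ =>
      rcases i with _ | _ | i
      · exact ih (next_iff.2 h₁) hp.2
      · exact ih (next_iff.2 h₂) hp.2
      · simp at hq
    | labs x h₁ | iabs x h₁ | cabs x h₁ | ibox h₁ =>
      rcases i with _ | i
      · exact ih (next_iff.2 h₁) hp.2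
      · simp at hq
    | cbox h₁ =>
      rcases i with _ | i
      · obtain ⟨P, hcP, hP⟩ := h₁.exists_star_of_true
        exact (ih hP hp.2).of_star hcP
      · simp at hq

end NextStep

/-- A free occurrence at depth 0. -/
def ShallowFreeAt (x : ℕ) : T → List ℕ → Prop
  | M, [] => M [] = some (Shape.var x)
  | M, i :: q => bindsX x (M []) = false ∧ M [] ≠ some Shape.cbox ∧ ShallowFreeAt x (child M i) q

def FreeOnlyShallow (x : ℕ) (M : T) : Prop := ∀ p, FreeAt x M p → ShallowFreeAt x M p

section Shallow

variable {x : ℕ} {A B M M' : T}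

lemma ShallowFreeAt.freeAt {p : List ℕ} (h : ShallowFreeAt x M p) : FreeAt x M p := by
  induction p generalizing M with
  | nil => exact freeAt_nil.2 h
  | cons i q ih => exact freeAt_cons.2 ⟨h.1, ih h.2.2⟩

lemma FreeOnlyShallow.child (h : FreeOnlyShallow x M) (hb : bindsX x (M []) = false) (i : ℕ) :
    FreeOnlyShallow x (child M i) :=
  fun q hq => (h (i :: q) (freeAt_cons.2 ⟨hb, hq⟩)).2.2

lemma FreeOnlyShallow.not_free_of_cbox (h : FreeOnlyShallow x (mk1 Shape.cbox M)) :
    ¬ Free x M := fun ⟨q, hq⟩ => (h (0 :: q) (freeAt_cons.2 ⟨rfl, hq⟩)).2.1 rfl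

lemma NextStep.subst_of_freeOnlyShallow (h : NextStep M M') (hAB : NextStep A B)
    (hx : FreeOnlyShallow x M) : NextStep (subst x A M) (subst x B M') := by
  unfold NextStep at h
  generalize hb : false = b at h
  induction h with
  | base hr => exact absurd (hb ▸ hr) IRCo.not_false
  | varr z =>
    by_cases hz : z = x
    · simpa [hz] using hAB
    · simpa [hz] using .varr z
  | app _ _ ih₁ ih₂ =>
    simpa using .app (ih₁ (hx.child rfl 0) rfl) (ih₂ (hx.child rfl 1) rfl)
  | labs z h₁ ih | iabs z h₁ ih | cabs z h₁ ih =>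
    simp only [subst_labs, subst_iabs, subst_cabs]
    refine IRInd.mk1 rfl (by simp) ?_
    split_ifs with hz
    · exact h₁
    · exact ih (hx.child (by simpa using hz) 0) rfl
  | ibox _ ih => simpa using .ibox (ih (hx.child rfl 0) rfl)
  | cbox h₁ =>
    obtain ⟨P, hcP, hPc'⟩ := h₁.exists_star_of_true
    have hc : ¬ Free x _ := hx.not_free_of_cbox
    have hc' : ¬ Free x _ := fun hf => hc ((Free.of_next hPc' hf).of_star hcP)
    simpa [subst_of_not_free hc, subst_of_not_free hc'] using .cbox h₁

end Shallow

section WellFormed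

variable {R R' : Env4 → T → Prop} {Γ Γ' Γ₁ Γ₂ : Env4} {x y : ℕ} {M N : T}

lemma WF4Step.mono (hR : ∀ Δ M, R Δ M → R' Δ M) (h : WF4Step R Γ M) : WF4Step R' Γ M := by
  induction h with
  | base hr => exact .base (hR _ _ hr)
  | vl x h₁ h₂ => exact .vl x h₁ h₂
  | vd x h₁ h₂ => exact .vd x h₁ h₂
  | va x h₁ h₂ => exact .va x h₁ h₂
  | app hs _ _ ih₁ ih₂ => exact .app hs ih₁ ih₂
  | ll hx _ ih => exact .ll hx ih
  | li1 hx _ ih => exact .li1 hx ih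
  | li2 hx _ ih => exact .li2 hx ih
  | lc hx _ ih => exact .lc hx ih
  | mi hm _ ih => exact .mi hm ih

lemma CoStep4.mono {S S' : Env4 → T → Prop} (hS : ∀ Δ M, S Δ M → S' Δ M) :
    CoStep4 S Γ M → CoStep4 S' Γ M :=
  fun ⟨Γ', N, hmc, hM, hN⟩ => ⟨Γ', N, hmc, hM, hS _ _ hN⟩

lemma wf4_iff : WF4 Γ M ↔ WF4Step (CoStep4 WF4) Γ M := by
  constructor
  · rintro ⟨S, hS, h⟩
    exact (hS _ _ h).mono fun _ _ => CoStep4.mono fun _ _ h' => ⟨S, hS, h'⟩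
  · intro h
    refine ⟨fun Δ M => WF4Step (CoStep4 WF4) Δ M, fun _ _ h' => ?_, h⟩
    exact h'.mono fun _ _ => CoStep4.mono fun _ _ ⟨S, hS, h''⟩ =>
      (hS _ _ h'').mono fun _ _ => CoStep4.mono fun _ _ h''' => ⟨S, hS, h'''⟩

/-- The coinductive patterns `↑x` and `#x`. -/
def IsCoind (p : Option Pat4) : Prop := p = some Pat4.cm ∨ p = some Pat4.am

/-- How the pattern of a variable not bound at a node may change from the environment of the
node to that of a child; `box` says whether the node is a coinductive box. -/
structure PatStep (box : Prop) (a b : Option Pat4) : Prop where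
  none_of_none : a = none → b = none
  isCoind_iff : IsCoind a ↔ IsCoind b
  none_of_box : box → ¬ IsCoind a → b = none
  cm_of_not_box : ¬ box → a = some Pat4.cm → b = some Pat4.cm

section PatStep

variable {box : Prop} {a : Option Pat4}

lemma PatStep.refl (hbox : ¬ box) : PatStep box a a :=
  ⟨id, Iff.rfl, fun h => absurd h hbox, fun _ => id⟩

lemma Split4.patStep_left (h : Split4 Γ Γ₁ Γ₂) (hbox : ¬ box) (y : ℕ) :
    PatStep box (Γ y) (Γ₁ y) := by
  constructor <;> rcases h y with ⟨hs, h₁, -⟩ | ⟨h₀, h₁, -⟩ | ⟨h₀, ⟨h₁, -⟩ | ⟨-, h₁⟩⟩ <;>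
    simp_all [IsCoind, Shared4] <;> rcases h₀ with h₀ | h₀ <;> simp [h₀] at *

lemma Split4.patStep_right (h : Split4 Γ Γ₁ Γ₂) (hbox : ¬ box) (y : ℕ) :
    PatStep box (Γ y) (Γ₂ y) := by
  constructor <;> rcases h y with ⟨hs, -, h₂⟩ | ⟨h₀, -, h₂⟩ | ⟨h₀, ⟨-, h₂⟩ | ⟨h₂, -⟩⟩ <;>
    simp_all [IsCoind, Shared4] <;> rcases h₀ with h₀ | h₀ <;> simp [h₀] at *

lemma MiEnv.patStep (h : MiEnv Γ Γ') (hbox : ¬ box) (y : ℕ) : PatStep box (Γ y) (Γ' y) := by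
  constructor <;> rcases h y with ⟨h₀, h₁⟩ | ⟨h₀, h₁⟩ | ⟨h₀, h₁⟩ | ⟨h₀, h₁⟩ | ⟨h₀, h₁⟩ <;>
    simp_all [IsCoind]

lemma McEnv.patStep (h : McEnv Γ Γ') (hbox : box) (y : ℕ) : PatStep box (Γ y) (Γ' y) := by
  constructor <;> rcases h y with ⟨h₀, h₁⟩ | ⟨h₀, h₁⟩ | ⟨h₀, h₁⟩ | ⟨h₀, h₁⟩ <;>
    simp_all [IsCoind]

end PatStep

lemma WF4.exists_child (h : WF4 Γ M) {i : ℕ} (hi : child M i ≠ empty) :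
    ∃ Γ', WF4 Γ' (child M i) ∧
      ∀ x, bindsX x (M []) = false → PatStep (M [] = some Shape.cbox) (Γ x) (Γ' x) := by
  cases wf4_iff.1 h with
  | base hr =>
    obtain ⟨Γ', N, hmc, rfl, hN⟩ := hr
    rcases i with _ | i
    · exact ⟨Γ', hN, fun x _ => hmc.patStep rfl x⟩
    · simp at hi
  | vl | vd | va => simp at hi
  | app hsp h₁ h₂ =>
    rcases i with _ | _ | i
    · exact ⟨_, wf4_iff.2 h₁, fun x _ => hsp.patStep_left (by simp) x⟩
    · exact ⟨_, wf4_iff.2 h₂, fun x _ => hsp.patStep_right (by simp) x⟩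
    · simp at hi
  | ll _ h₁ | li1 _ h₁ | li2 _ h₁ | lc _ h₁ =>
    rcases i with _ | i
    · refine ⟨_, wf4_iff.2 h₁, fun x hx => ?_⟩
      simp only [mk1_nil, bindsX_labs, bindsX_iabs, bindsX_cabs, beq_eq_false_iff_ne] at hx
      simpa [Env4.upd, Ne.symm hx] using PatStep.refl (by simp)
    · simp at hi
  | mi hmi h₁ =>
    rcases i with _ | i
    · exact ⟨_, wf4_iff.2 h₁, fun x _ => hmi.patStep (by simp) x⟩
    · simp at hi

lemma WF4.pat_of_root_var (h : WF4 Γ M) (hM : M [] = some (Shape.var x)) :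
    Γ x = some Pat4.lin ∨ Γ x = some Pat4.dm ∨ Γ x = some Pat4.am := by
  cases wf4_iff.1 h with
  | base hr => obtain ⟨_, _, _, rfl, _⟩ := hr; simp at hM
  | vl z hz | vd z hz | va z hz =>
    obtain rfl : z = x := by simpa using hM
    simp [hz]
  | _ => simp at hM

lemma WF4.pat_of_root_binds (h : WF4 Γ M) (hM : bindsX x (M []) = true) : Γ x = none := by
  cases wf4_iff.1 h with
  | base hr => obtain ⟨_, _, _, rfl, _⟩ := hr; simp at hM
  | ll hz | li1 hz | li2 hz | lc hz =>
    obtain rfl : _ = x := by simpa using hM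
    exact hz
  | _ => simp at hM

lemma WF4.ne_none_of_freeAt {p : List ℕ} (h : WF4 Γ M) (hf : FreeAt x M p) : Γ x ≠ none := by
  induction p generalizing Γ M with
  | nil => rcases h.pat_of_root_var (freeAt_nil.1 hf) with hx | hx | hx <;> simp [hx]
  | cons i q ih =>
    rw [freeAt_cons] at hf
    obtain ⟨Γ', h', hstep⟩ := h.exists_child (ne_empty_of_freeAt hf.2)
    exact fun hx => ih h' hf.2 ((hstep x hf.1).none_of_none hx)

lemma WF4.noBinder_of_isCoind (h : WF4 Γ M) (hx : IsCoind (Γ x)) : NoBinder x M := by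
  have root : ∀ {Γ M}, WF4 Γ M → IsCoind (Γ x) → bindsX x (M []) = false := fun h hx => by
    by_contra hb
    simp [h.pat_of_root_binds (by simpa using hb), IsCoind] at hx
  intro p
  induction p generalizing Γ M with
  | nil => exact root h hx
  | cons i q ih =>
    by_cases hi : child M i = empty
    · show bindsX x (child M i q) = false
      simp [hi]
    obtain ⟨Γ', h', hstep⟩ := h.exists_child hi
    exact ih h' ((hstep x (root h hx)).isCoind_iff.1 hx)

lemma WF4.freeOnlyShallow (h : WF4 Γ M) (hx : ¬ IsCoind (Γ x)) : FreeOnlyShallow x M := by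
  intro p hf
  induction p generalizing Γ M with
  | nil => exact freeAt_nil.1 hf
  | cons i q ih =>
    rw [freeAt_cons] at hf
    obtain ⟨Γ', h', hstep⟩ := h.exists_child (ne_empty_of_freeAt hf.2)
    have hc : M [] ≠ some Shape.cbox := fun hc =>
      h'.ne_none_of_freeAt hf.2 ((hstep x hf.1).none_of_box hc hx)
    exact ⟨hf.1, hc, ih h' (fun h'' => hx ((hstep x hf.1).isCoind_iff.2 h'')) hf.2⟩

lemma WF4.not_shallowFreeAt_of_cm {p : List ℕ} (h : WF4 Γ M) (hx : Γ x = some Pat4.cm) :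
    ¬ ShallowFreeAt x M p := by
  induction p generalizing Γ M with
  | nil => intro hf; rcases h.pat_of_root_var hf with h' | h' | h' <;> simp [hx] at h'
  | cons i q ih =>
    rintro ⟨hb, hc, hf⟩
    obtain ⟨Γ', h', hstep⟩ := h.exists_child (ne_empty_of_freeAt hf.freeAt)
    exact ih h' ((hstep x hb).cm_of_not_box hc hx) hf

lemma WF4.isCoind_of_free_cbox (h : WF4 Γ (mk1 Shape.cbox N)) (hf : Free y N) : IsCoind (Γ y) := by
  obtain ⟨p, hp⟩ := hf
  obtain ⟨Γ', h', hstep⟩ := h.exists_child (i := 0) (ne_empty_of_freeAt hp)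
  by_contra hy
  exact h'.ne_none_of_freeAt hp ((hstep y rfl).none_of_box rfl hy)

lemma WF4.inv_labs (h : WF4 Γ (mk1 (Shape.labs x) M)) : WF4 (Γ.upd x (some Pat4.lin)) M := by
  have h' := wf4_iff.1 h
  generalize hM : mk1 (Shape.labs x) M = M' at h'
  cases h' with
  | base hr => obtain ⟨_, _, _, rfl, _⟩ := hr; simp [mk1_inj] at hM
  | ll _ h₁ => obtain ⟨⟨⟩, rfl⟩ := mk1_inj.1 hM; exact wf4_iff.2 h₁
  | _ => simpa using congrFun hM []

lemma WF4.inv_iabs (h : WF4 Γ (mk1 (Shape.iabs x) M)) :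
    WF4 (Γ.upd x (some Pat4.dm)) M ∨ WF4 (Γ.upd x (some Pat4.im)) M := by
  have h' := wf4_iff.1 h
  generalize hM : mk1 (Shape.iabs x) M = M' at h'
  cases h' with
  | base hr => obtain ⟨_, _, _, rfl, _⟩ := hr; simp [mk1_inj] at hM
  | li1 _ h₁ => obtain ⟨⟨⟩, rfl⟩ := mk1_inj.1 hM; exact .inl (wf4_iff.2 h₁)
  | li2 _ h₁ => obtain ⟨⟨⟩, rfl⟩ := mk1_inj.1 hM; exact .inr (wf4_iff.2 h₁)
  | _ => simpa using congrFun hM []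

lemma WF4.inv_cabs (h : WF4 Γ (mk1 (Shape.cabs x) M)) : WF4 (Γ.upd x (some Pat4.cm)) M := by
  have h' := wf4_iff.1 h
  generalize hM : mk1 (Shape.cabs x) M = M' at h'
  cases h' with
  | base hr => obtain ⟨_, _, _, rfl, _⟩ := hr; simp [mk1_inj] at hM
  | lc _ h₁ => obtain ⟨⟨⟩, rfl⟩ := mk1_inj.1 hM; exact wf4_iff.2 h₁
  | _ => simpa using congrFun hM []

lemma WF4.captureFree_of_coi_redex {z : ℕ} {M₀ N₀ : T}
    (h : WF4 Γ (mk2 (mk1 (Shape.cabs z) M₀) (mk1 Shape.cbox N₀))) : CaptureFree z N₀ M₀ := by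
  obtain ⟨Γ₁, hF, hstep₁⟩ := h.exists_child (i := 0) (by simp)
  obtain ⟨Γ₂, hG, hstep₂⟩ := h.exists_child (i := 1) (by simp)
  have hM₀ := WF4.inv_cabs hF
  rintro y (rfl | hy)
  · exact hM₀.noBinder_of_isCoind (by simp [Env4.upd, IsCoind])
  · have hΓ₁ : IsCoind (Γ₁ y) := (hstep₁ y rfl).isCoind_iff.1
      ((hstep₂ y rfl).isCoind_iff.2 (hG.isCoind_of_free_cbox hy))
    refine hM₀.noBinder_of_isCoind ?_
    by_cases hyz : y = z
    · simp [Env4.upd, hyz, IsCoind]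
    · simpa [Env4.upd, hyz] using hΓ₁

end WellFormed

/-- Substitution of `As` for the free occurrences of `z` at depth 0 and of `Ao` for the deeper
ones. -/
def subst2F (z : ℕ) (As Ao : T) : T → List ℕ → Option Shape
  | M, [] => if M [] = some (Shape.var z) then As [] else M []
  | M, i :: q =>
      if M [] = some (Shape.var z) then As (i :: q)
      else if bindsX z (M []) then M (i :: q)
      else if M [] = some Shape.cbox then substF z Ao (child M i) q
      else subst2F z As Ao (child M i) q

def subst2 (z : ℕ) (As Ao M : T) : T := fun p => subst2F z As Ao M p

section Subst2

variable {z : ℕ} {As Ao C : T}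

lemma subst2_nil :
    subst2 z As Ao C [] = if C [] = some (Shape.var z) then As [] else C [] := by
  simp only [subst2]; unfold subst2F; rfl

lemma child_subst2_eq (i : ℕ) : child (subst2 z As Ao C) i =
    if C [] = some (Shape.var z) then child As i
    else if bindsX z (C []) then child C i
    else if C [] = some Shape.cbox then subst z Ao (child C i)
    else subst2 z As Ao (child C i) := by
  funext q
  simp only [child, subst2]
  unfold subst2F
  split_ifs <;> rfl

lemma subst2_of_root_var (h : C [] = some (Shape.var z)) : subst2 z As Ao C = As :=
  ext_child (by simp [subst2_nil, h]) fun i => by simp [child_subst2_eq, h]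

lemma subst2_of_binds (h : bindsX z (C []) = true) : subst2 z As Ao C = C := by
  have hv : C [] ≠ some (Shape.var z) := fun e => by simp [e] at h
  exact ext_child (by simp [subst2_nil, hv]) fun i => by simp [child_subst2_eq, hv, h]

lemma subst2_nil_of_ne (h : C [] ≠ some (Shape.var z)) : subst2 z As Ao C [] = C [] := by
  simp [subst2_nil, h]

lemma child_subst2 (hv : C [] ≠ some (Shape.var z)) (hb : bindsX z (C []) = false)
    (hc : C [] ≠ some Shape.cbox) (i : ℕ) :
    child (subst2 z As Ao C) i = subst2 z As Ao (child C i) := by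
  simp [child_subst2_eq, hv, hb, hc]

lemma subst2_empty : subst2 z As Ao empty = empty :=
  eq_of_root_child (P := (· = empty)) (G := fun _ => empty) (fun C hC => by
    subst hC
    refine Or.inr ⟨by simp [subst2_nil], fun i => ⟨rfl, ?_, rfl⟩⟩
    exact child_subst2 (by simp) (by simp) (by simp) i) empty rfl

@[simp] lemma subst2_mk2 (M N : T) :
    subst2 z As Ao (mk2 M N) = mk2 (subst2 z As Ao M) (subst2 z As Ao N) := by
  refine ext_child (by simp [subst2_nil]) fun i => ?_
  rw [child_subst2 (by simp) (by simp) (by simp)]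
  rcases i with _ | _ | i <;> simp [subst2_empty]

lemma subst2_mk1 {s : Shape} (M : T) (hv : s ≠ Shape.var z) (hc : s ≠ Shape.cbox) :
    subst2 z As Ao (mk1 s M) =
      mk1 s (if bindsX z (some s) then M else subst2 z As Ao M) := by
  split_ifs with hb
  · exact subst2_of_binds hb
  · refine ext_child (by simp [subst2_nil, hv]) fun i => ?_
    rw [child_subst2 (by simpa using hv) (by simpa using hb) (by simpa using hc)]
    rcases i with _ | i <;> simp [subst2_empty]

@[simp] lemma subst2_labs {y : ℕ} (M : T) : subst2 z As Ao (mk1 (Shape.labs y) M) =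
    mk1 (Shape.labs y) (if y = z then M else subst2 z As Ao M) := by simp [subst2_mk1]
@[simp] lemma subst2_iabs {y : ℕ} (M : T) : subst2 z As Ao (mk1 (Shape.iabs y) M) =
    mk1 (Shape.iabs y) (if y = z then M else subst2 z As Ao M) := by simp [subst2_mk1]
@[simp] lemma subst2_cabs {y : ℕ} (M : T) : subst2 z As Ao (mk1 (Shape.cabs y) M) =
    mk1 (Shape.cabs y) (if y = z then M else subst2 z As Ao M) := by simp [subst2_mk1]
@[simp] lemma subst2_ibox (M : T) :
    subst2 z As Ao (mk1 Shape.ibox M) = mk1 Shape.ibox (subst2 z As Ao M) := by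
  simp [subst2_mk1]

@[simp] lemma subst2_cbox (M : T) :
    subst2 z As Ao (mk1 Shape.cbox M) = mk1 Shape.cbox (subst z Ao M) := by
  refine ext_child (by simp [subst2_nil]) fun i => ?_
  rw [child_subst2_eq]
  rcases i with _ | i <;> simp [subst_empty]

@[simp] lemma subst2_var {y : ℕ} :
    subst2 z As Ao (mk0 (Shape.var y)) = if y = z then As else mk0 (Shape.var y) := by
  split_ifs with h
  · exact subst2_of_root_var (by simp [h])
  · exact ext_child (by simp [subst2_nil, h]) fun i => by
      rw [child_subst2 (by simpa using h) rfl (by simp)]; simp [subst2_empty]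

lemma subst2_eq_subst (h : ∀ p, ¬ ShallowFreeAt z C p) : subst2 z As Ao C = subst z Ao C := by
  refine eq_of_root_child (P := fun C => ∀ p, ¬ ShallowFreeAt z C p)
    (F := subst2 z As Ao) (G := subst z Ao) (fun C hC => ?_) C h
  have hv : C [] ≠ some (Shape.var z) := hC []
  by_cases hb : bindsX z (C []) = true
  · exact Or.inl (by rw [subst2_of_binds hb, subst_of_binds hb])
  simp only [Bool.not_eq_true] at hb
  by_cases hc : C [] = some Shape.cbox
  · exact Or.inl (ext_child (by rw [subst2_nil_of_ne hv, subst_nil_of_ne hv]) fun i => by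
      rw [child_subst2_eq, child_subst_eq]; simp [hc])
  refine Or.inr ⟨by rw [subst2_nil_of_ne hv, subst_nil_of_ne hv], fun i => ⟨?_, ?_, ?_⟩⟩
  · exact fun q hq => hC (i :: q) ⟨hb, hc, hq⟩
  · exact child_subst2 hv hb hc i
  · exact child_subst hv hb i

end Subst2

inductive ShallowFinite : T → Prop
  | var (x : ℕ) : ShallowFinite (mk0 (Shape.var x))
  | app {M N : T} : ShallowFinite M → ShallowFinite N → ShallowFinite (mk2 M N)
  | unary {s : Shape} {M : T} : arity s = 1 → s ≠ Shape.cbox → ShallowFinite M →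
      ShallowFinite (mk1 s M)
  | cbox (M : T) : ShallowFinite (mk1 Shape.cbox M)

def subtermAt (M : T) (p : List ℕ) : T := fun q => M (p ++ q)

def BodiesShallowFinite (M : T) : Prop :=
  ∀ p, M p = some Shape.cbox → ShallowFinite (subtermAt M (p ++ [0]))

section ShallowFinite

variable {s : Shape} {z : ℕ} {A B C M N : T}

lemma ShallowFinite.inv_mk2 (h : ShallowFinite (mk2 A B)) : ShallowFinite A ∧ ShallowFinite B := by
  generalize hM : mk2 A B = M at h
  cases h with
  | app h₁ h₂ => obtain ⟨rfl, rfl⟩ := mk2_inj.1 hM; exact ⟨h₁, h₂⟩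
  | unary hs =>
    obtain rfl : Shape.app = _ := by simpa using congrFun hM []
    simp [arity] at hs
  | _ => simpa using congrFun hM []

lemma ShallowFinite.inv_mk1 (h : ShallowFinite (mk1 s A)) (hs : arity s = 1)
    (hc : s ≠ Shape.cbox) : ShallowFinite A := by
  generalize hM : mk1 s A = M at h
  cases h with
  | unary _ _ h₁ => obtain ⟨rfl, rfl⟩ := mk1_inj.1 hM; exact h₁
  | cbox => exact absurd (mk1_inj.1 hM).1 hc
  | _ =>
    obtain rfl : s = _ := by simpa using congrFun hM []
    simp [arity] at hs

lemma bodiesShallowFinite_iff : BodiesShallowFinite M ↔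
    (M [] = some Shape.cbox → ShallowFinite (child M 0)) ∧
      ∀ i, BodiesShallowFinite (child M i) := by
  constructor
  · exact fun h => ⟨h [], fun i p hp => h (i :: p) hp⟩
  · rintro ⟨h₀, h⟩ (_ | ⟨i, p⟩) hp
    exacts [h₀ hp, h i p hp]

lemma BodiesShallowFinite.child (h : BodiesShallowFinite M) (i : ℕ) :
    BodiesShallowFinite (LLInf.child M i) :=
  (bodiesShallowFinite_iff.1 h).2 i

lemma BodiesShallowFinite.body (h : BodiesShallowFinite M) (hc : M [] = some Shape.cbox) :
    ShallowFinite (LLInf.child M 0) :=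
  (bodiesShallowFinite_iff.1 h).1 hc

lemma bodiesShallowFinite_empty : BodiesShallowFinite empty := fun _ h => by simp at h

lemma bodiesShallowFinite_mk2 (hA : BodiesShallowFinite A) (hB : BodiesShallowFinite B) :
    BodiesShallowFinite (mk2 A B) :=
  bodiesShallowFinite_iff.2 ⟨by simp, fun i => by
    rcases i with _ | _ | i <;> simp [hA, hB, bodiesShallowFinite_empty]⟩

lemma bodiesShallowFinite_mk1 (hA : BodiesShallowFinite A)
    (hc : s = Shape.cbox → ShallowFinite A) : BodiesShallowFinite (mk1 s A) :=
  bodiesShallowFinite_iff.2 ⟨fun h => hc (by simpa using h), fun i => by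
    rcases i with _ | i <;> simp [hA, bodiesShallowFinite_empty]⟩

lemma ShallowFinite.subst (hC : ShallowFinite C) (hB : ShallowFinite B) :
    ShallowFinite (LLInf.subst z B C) := by
  induction hC with
  | var x => by_cases hx : x = z <;> simp [hx, hB, ShallowFinite.var]
  | app _ _ ih₁ ih₂ => simpa using ih₁.app ih₂
  | unary hs hc h ih =>
    rw [subst_mk1 _ (by rintro rfl; simp [arity] at hs)]
    split_ifs
    exacts [.unary hs hc h, .unary hs hc ih]
  | cbox M => simpa using .cbox _

lemma BodiesShallowFinite.subst (hC : BodiesShallowFinite C) (hB : BodiesShallowFinite B)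
    (hBf : ShallowFinite B) : BodiesShallowFinite (LLInf.subst z B C) := by
  intro p
  induction p generalizing C with
  | nil =>
    intro hp
    by_cases hv : C [] = some (Shape.var z)
    · rw [subst_of_root_var hv] at hp ⊢; exact hB [] hp
    rw [subst_nil_of_ne hv] at hp
    have : subtermAt (LLInf.subst z B C) [0] = LLInf.subst z B (subtermAt C [0]) :=
      child_subst hv (by simp [hp]) 0
    exact this ▸ (hC [] hp).subst hBf
  | cons i q ih =>
    intro hp
    by_cases hv : C [] = some (Shape.var z)
    · rw [subst_of_root_var hv] at hp ⊢; exact hB _ hp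
    by_cases hb : bindsX z (C []) = true
    · rw [subst_of_binds hb] at hp ⊢; exact hC _ hp
    simp only [Bool.not_eq_true] at hb
    change LLInf.child (LLInf.subst z B C) i q = _ at hp
    show ShallowFinite (subtermAt (LLInf.child (LLInf.subst z B C) i) (q ++ [0]))
    rw [child_subst hv hb i] at hp ⊢
    exact ih (hC.child i) hp

lemma ShallowFinite.red {l : List Bool} (h : Red l M N) (hM : ShallowFinite M)
    (hb : BodiesShallowFinite M) : ShallowFinite N ∧ BodiesShallowFinite N := by
  induction h with
  | base hred =>
    cases hred with
    | lin =>
      have hM₀ := hM.inv_mk2.1.inv_mk1 rfl (by simp)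
      exact ⟨hM₀.subst hM.inv_mk2.2, ((hb.child 0).child 0).subst (hb.child 1) hM.inv_mk2.2⟩
    | ind =>
      have hM₀ := hM.inv_mk2.1.inv_mk1 rfl (by simp)
      have hN₀ := hM.inv_mk2.2.inv_mk1 rfl (by simp)
      exact ⟨hM₀.subst hN₀, ((hb.child 0).child 0).subst ((hb.child 1).child 0) hN₀⟩
    | coi =>
      have hM₀ := hM.inv_mk2.1.inv_mk1 rfl (by simp)
      have hN₀ := (hb.child 1).body rfl
      exact ⟨hM₀.subst hN₀, ((hb.child 0).child 0).subst ((hb.child 1).child 0) hN₀⟩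
  | appL _ _ ih =>
    obtain ⟨h₁, hb₁⟩ := ih hM.inv_mk2.1 (hb.child 0)
    exact ⟨h₁.app hM.inv_mk2.2, bodiesShallowFinite_mk2 hb₁ (hb.child 1)⟩
  | appR _ _ ih =>
    obtain ⟨h₂, hb₂⟩ := ih hM.inv_mk2.2 (hb.child 1)
    exact ⟨hM.inv_mk2.1.app h₂, bodiesShallowFinite_mk2 (hb.child 0) hb₂⟩
  | labs _ _ ih | iabs _ _ ih | cabs _ _ ih | ibox _ ih =>
    obtain ⟨h₁, hb₁⟩ := ih (hM.inv_mk1 rfl (by simp)) (hb.child 0)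
    exact ⟨.unary rfl (by simp) h₁, bodiesShallowFinite_mk1 hb₁ (by simp)⟩
  | cbox _ ih =>
    obtain ⟨h₁, hb₁⟩ := ih (hb.body rfl) (hb.child 0)
    exact ⟨.cbox _, bodiesShallowFinite_mk1 hb₁ fun _ => h₁⟩

lemma ShallowFinite.star (h : Star M N) (hM : ShallowFinite M) (hb : BodiesShallowFinite M) :
    ShallowFinite N ∧ BodiesShallowFinite N := by
  induction h with
  | refl => exact ⟨hM, hb⟩
  | tail _ hstep ih => exact ih.1.red hstep.choose_spec ih.2

end ShallowFinite

section WellFormed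

variable {Γ : Env4} {M : T}

lemma WF4.shallowFinite (h : WF4 Γ M) : ShallowFinite M := by
  have h' := wf4_iff.1 h
  clear h
  induction h' with
  | base hr => obtain ⟨_, _, _, rfl, _⟩ := hr; exact .cbox _
  | vl x | vd x | va x => exact .var x
  | app _ _ _ ih₁ ih₂ => exact ih₁.app ih₂
  | ll _ _ ih | li1 _ _ ih | li2 _ _ ih | lc _ _ ih | mi _ _ ih => exact .unary rfl (by simp) ih

lemma WF4.bodiesShallowFinite (h : WF4 Γ M) : BodiesShallowFinite M := by
  intro p
  induction p generalizing Γ M with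
  | nil =>
    intro hc
    cases wf4_iff.1 h with
    | base hr => obtain ⟨_, _, _, rfl, hN⟩ := hr; exact hN.shallowFinite
    | _ => simp at hc
  | cons i q ih =>
    intro hp
    change child M i q = _ at hp
    obtain ⟨Γ', h', -⟩ := h.exists_child (i := i) fun he => by simp [he] at hp
    exact ih h' hp

end WellFormed

section Star

variable {s : Shape} {A B P : T}

lemma Red.exists_mk1 {l : List Bool} (hs : arity s = 1) (hc : s ≠ Shape.cbox) (h : Red l A B) :
    Red' (mk1 s A) (mk1 s B) := by
  cases s <;> simp [arity] at hs hc
  exacts [⟨_, .labs _ h⟩, ⟨_, .iabs _ h⟩, ⟨_, .cabs _ h⟩, ⟨_, .ibox h⟩]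

lemma Star.mk1 (hs : arity s = 1) (hc : s ≠ Shape.cbox) (h : Star A B) :
    Star (mk1 s A) (mk1 s B) :=
  h.lift _ fun _ _ ⟨_, h'⟩ => Red.exists_mk1 hs hc h'

lemma Star.mk2_left (h : Star A B) : Star (mk2 A P) (mk2 B P) :=
  h.lift (mk2 · P) fun _ _ ⟨l, h'⟩ => ⟨l, .appL P h'⟩

lemma Star.mk2_right (h : Star A B) : Star (mk2 P A) (mk2 P B) :=
  h.lift (mk2 P ·) fun _ _ ⟨l, h'⟩ => ⟨l, .appR P h'⟩

lemma Star.subst_subst2 {z : ℕ} {Ao As m : T} (hA : Star Ao As) (hm : ShallowFinite m) :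
    Star (LLInf.subst z Ao m) (subst2 z As Ao m) := by
  induction hm with
  | var x =>
    by_cases hx : x = z
    · simpa [hx] using hA
    · simp only [subst_var, subst2_var, hx, if_false]; exact .refl
  | app _ _ ih₁ ih₂ =>
    simp only [subst_mk2, subst2_mk2]
    exact ih₁.mk2_left.trans ih₂.mk2_right
  | @unary s _ hs hc _ ih =>
    have hv : s ≠ Shape.var z := by rintro rfl; simp [arity] at hs
    rw [subst_mk1 _ hv, subst2_mk1 _ hv hc]
    split_ifs
    exacts [.refl, ih.mk1 hs hc]
  | cbox => simpa using .refl

end Star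

def SubstPair (P Q : T) : Prop :=
  ∃ z Ao As B M M', P = subst2 z As Ao M ∧ Q = subst z B M' ∧ Next M M' ∧ Star Ao As ∧
    Next As B ∧ CaptureFree z Ao M ∧ BodiesShallowFinite M

section SubstCoind

variable {z : ℕ} {Ao As B M M' : T}

lemma NextStep.subst2 (h : NextStep M M') (hA : Star Ao As) (hAB : Next As B)
    (hcap : CaptureFree z Ao M) (hfin : BodiesShallowFinite M) :
    IRInd (IRCo fun b P Q => b = false ∧ SubstPair P Q ∨ IRSys b P Q) false
      (LLInf.subst2 z As Ao M) (subst z B M') := by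
  unfold NextStep at h
  generalize hb : false = b at h
  induction h with
  | base hr => exact absurd (hb ▸ hr) IRCo.not_false
  | varr w =>
    by_cases hw : w = z
    · simpa [hw] using (next_iff.1 hAB).mono fun _ _ _ => IRCo.mono fun _ _ _ => Or.inr
    · simpa [hw] using .varr w
  | app _ _ ih₁ ih₂ =>
    simpa using .app (ih₁ (hcap.child 0) (hfin.child 0) rfl) (ih₂ (hcap.child 1) (hfin.child 1) rfl)
  | labs w _ ih | iabs w _ ih | cabs w _ ih =>
    have hwz : w ≠ z := by simpa using hcap z (Or.inl rfl) []
    simp only [subst2_labs, subst2_iabs, subst2_cabs, subst_labs, subst_iabs, subst_cabs, hwz,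
      if_false]
    exact IRInd.mk1 rfl (by simp) (ih (hcap.child 0) (hfin.child 0) rfl)
  | ibox _ ih =>
    simpa using .ibox (ih (hcap.child 0) (hfin.child 0) rfl)
  | @cbox c c' h₁ =>
    obtain ⟨P, hcP, hPc'⟩ := h₁.exists_star_of_true
    obtain ⟨hPf, hPb⟩ := (hfin.body rfl).star hcP (hfin.child 0)
    have hcap' : CaptureFree z Ao c := hcap.child 0
    simp only [subst2_cbox, subst_cbox]
    refine .cbox (.base ⟨rfl, LLInf.subst2 z As Ao P, (hcP.subst hcap').trans (hA.subst_subst2 hPf),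
      Or.inl ⟨rfl, z, Ao, As, B, P, c', rfl, rfl, hPc', hA, hAB, ?_, hPb⟩⟩)
    exact fun y hy => (hcap' y hy).star hcP

lemma Next.subst2 (h : Next M M') (hA : Star Ao As) (hAB : Next As B)
    (hcap : CaptureFree z Ao M) (hfin : BodiesShallowFinite M) :
    Next (LLInf.subst2 z As Ao M) (subst z B M') :=
  IRSys.coinduct (fun b P Q => b = false ∧ SubstPair P Q)
    (fun _ _ _ ⟨hb, z, Ao, As, B, M, M', hP, hQ, hMM, hA, hAB, hcap, hfin⟩ => by
      subst hb hP hQ; exact (next_iff.1 hMM).subst2 hA hAB hcap hfin)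
    ⟨rfl, z, Ao, As, B, M, M', rfl, rfl, h, hA, hAB, hcap, hfin⟩

end SubstCoind

section Noninterference

variable {Γ : Env4} {M N L : T}

lemma Basic.noninterference (hb : Basic M N) (h : WF4 Γ M) (hL : NextStep M L) :
    ∃ P, NextStep N P ∧ Basic L P := by
  obtain ⟨Γ₁, hF, -⟩ := h.exists_child (i := 0) (by cases hb <;> simp)
  cases hb with
  | lin z M₀ N₀ =>
    obtain ⟨F', N₀', rfl, hF', hN₀⟩ := hL.inv_mk2
    obtain ⟨M₀', rfl, hM₀⟩ := hF'.inv_mk1 rfl (by simp)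
    have hz : FreeOnlyShallow z M₀ := hF.inv_labs.freeOnlyShallow (by simp [Env4.upd, IsCoind])
    exact ⟨_, hM₀.subst_of_freeOnlyShallow hN₀ hz, .lin z M₀' N₀'⟩
  | ind z M₀ N₀ =>
    obtain ⟨F', G', rfl, hF', hG'⟩ := hL.inv_mk2
    obtain ⟨M₀', rfl, hM₀⟩ := hF'.inv_mk1 rfl (by simp)
    obtain ⟨N₀', rfl, hN₀⟩ := hG'.inv_mk1 rfl (by simp)
    have hz : FreeOnlyShallow z M₀ := by
      rcases hF.inv_iabs with h' | h' <;> exact h'.freeOnlyShallow (by simp [Env4.upd, IsCoind])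
    exact ⟨_, hM₀.subst_of_freeOnlyShallow hN₀ hz, .ind z M₀' N₀'⟩
  | coi z M₀ N₀ =>
    obtain ⟨F', G', rfl, hF', hG'⟩ := hL.inv_mk2
    obtain ⟨M₀', rfl, hM₀⟩ := hF'.inv_mk1 rfl (by simp)
    obtain ⟨N₀', P, rfl, hN₀P, hPN₀'⟩ := hG'.inv_cbox
    have hM₀wf := hF.inv_cabs
    refine ⟨_, ?_, .coi z M₀' N₀'⟩
    rw [← subst2_eq_subst (As := P) fun p => hM₀wf.not_shallowFreeAt_of_cm (by simp [Env4.upd])]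
    exact next_iff.1 ((next_iff.2 hM₀).subst2 hN₀P hPN₀' h.captureFree_of_coi_redex
      hM₀wf.bodiesShallowFinite)

lemma Red.noninterference {l : List Bool} (hr : Red l M N) (hl : l.count true = 0)
    (h : WF4 Γ M) (hL : NextStep M L) : ∃ P, NextStep N P ∧ Red l L P := by
  induction hr generalizing Γ L with
  | base hb =>
    obtain ⟨P, hP, hLP⟩ := hb.noninterference h hL
    exact ⟨P, hP, .base hLP⟩
  | appL _ hr ih =>
    obtain ⟨L₁, L₂, rfl, h₁, h₂⟩ := hL.inv_mk2
    obtain ⟨Γ₁, hw, -⟩ := h.exists_child (i := 0) (by simpa using hr.ne_empty)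
    obtain ⟨P, hP, hred⟩ := ih hl hw h₁
    exact ⟨_, .app hP h₂, .appL _ hred⟩
  | appR _ hr ih =>
    obtain ⟨L₁, L₂, rfl, h₁, h₂⟩ := hL.inv_mk2
    obtain ⟨Γ₂, hw, -⟩ := h.exists_child (i := 1) (by simpa using hr.ne_empty)
    obtain ⟨P, hP, hred⟩ := ih hl hw h₂
    exact ⟨_, .app h₁ hP, .appR _ hred⟩
  | labs z hr ih | iabs z hr ih | cabs z hr ih =>
    obtain ⟨L₁, rfl, h₁⟩ := hL.inv_mk1 rfl (by simp)
    obtain ⟨Γ₁, hw, -⟩ := h.exists_child (i := 0) (by simpa using hr.ne_empty)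
    obtain ⟨P, hP, hred⟩ := ih hl hw h₁
    exact ⟨_, IRInd.mk1 rfl (by simp) hP, by constructor; exact hred⟩
  | ibox hr ih =>
    obtain ⟨L₁, rfl, h₁⟩ := hL.inv_mk1 rfl (by simp)
    obtain ⟨Γ₁, hw, -⟩ := h.exists_child (i := 0) (by simpa using hr.ne_empty)
    obtain ⟨P, hP, hred⟩ := ih (by simpa using hl) hw h₁
    exact ⟨_, .ibox hP, .ibox hred⟩
  | cbox => simp at hl

end Noninterference

/-- Noninterference: if `M` reduces at depth 0 to `N` and `M ⤳ L`, then there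
is `P` with `N ⤳ P` and `L` reducing at depth 0 to `P`. -/
theorem noninterference (Γ : Env4) (M N L : T)
    (h : WF4 Γ M) (hr : RedAt 0 M N) (hn : Next M L) :
    ∃ P : T, Next N P ∧ RedAt 0 L P := by
  obtain ⟨l, hl, hred⟩ := hr
  obtain ⟨P, hP, hLP⟩ := hred.noninterference hl h (next_iff.1 hn)
  exact ⟨P, next_iff.2 hP, l, hl, hLP⟩

end LLInf
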